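/- arXiv:1110.6630 — 5 statements merged into one kernel-verified Lean document; each statement's English description precedes it below -/
import Mathlib

section
/- In a geodesic δ-hyperbolic space, let b be a point, σ a geodesic, and R = d(b, σ). Let a ∈ σ be a foot of a perpendicular (i.e., a point of σ realizing the distance R from b), and let c be a point of σ with |b - c| = R + 2Δ for some Δ ≥ 0. Then |a - c| ≤ 2Δ + 4δ. -/
open Metric Set

/-!
Suppose `|a - c| > 2Δ + 4δ` and let `p` be the point of the subsegment `[a, c] ⊆ σ` with
`|a - p| = |a - c| / 2 - Δ`, so `|c - p| = |a - c| / 2 + Δ`. As `a` is a foot, `|b - p| ≥ |b - a|`.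
By thinness of the triangle `a c b`, `p` is `δ`-close to a point `q` of `[a, b]` or of `[c, b]`,
and going through `q` gives `|a - p| + |p - b| ≤ |a - b| + 2δ`, resp.
`|c - p| + |p - b| ≤ |c - b| + 2δ`. Hence `|a - p| ≤ 2δ` or `|c - p| ≤ 2Δ + 2δ`, both too small.
-/

/-- `s` is a geodesic segment from `x` to `y`. -/
def IsGeodSeg {X : Type*} [MetricSpace X] (x y : X) (s : Set X) : Prop :=
  ∃ f : ℝ → X, f 0 = x ∧ f (dist x y) = y ∧
    (∀ a ∈ Icc (0:ℝ) (dist x y), ∀ b ∈ Icc (0:ℝ) (dist x y), dist (f a) (f b) = |a - b|) ∧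
    s = f '' Icc (0:ℝ) (dist x y)

/-- A geodesic metric space: any two points are joined by a geodesic segment. -/
def GeodesicSpace (X : Type*) [MetricSpace X] : Prop :=
  ∀ x y : X, ∃ s : Set X, IsGeodSeg x y s

/-- δ-hyperbolicity via δ-thin geodesic triangles. -/
def ThinTriangles (X : Type*) [MetricSpace X] (δ : ℝ) : Prop :=
  ∀ (x y z : X) (sxy syz sxz : Set X),
    IsGeodSeg x y sxy → IsGeodSeg y z syz → IsGeodSeg x z sxz →
    ∀ p ∈ sxy, infDist p (syz ∪ sxz) ≤ δ

section

variable {X : Type*} [MetricSpace X]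

lemma isGeodSeg_image_Icc {f : ℝ → X} {p q : ℝ} (hpq : p ≤ q)
    (hf : ∀ s ∈ Icc p q, ∀ t ∈ Icc p q, dist (f s) (f t) = |s - t|) :
    IsGeodSeg (f p) (f q) (f '' Icc p q) := by
  have hd : dist (f p) (f q) = q - p := by
    rw [hf p ⟨le_rfl, hpq⟩ q ⟨hpq, le_rfl⟩, abs_sub_comm, abs_of_nonneg (sub_nonneg.2 hpq)]
  refine ⟨fun t => f (p + t), by simp, ?_, ?_, ?_⟩
  · show f (p + dist (f p) (f q)) = f q
    rw [hd, add_sub_cancel]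
  · rw [hd]
    intro s hs t ht
    rw [hf (p + s) ⟨by linarith [hs.1], by linarith [hs.2]⟩
      (p + t) ⟨by linarith [ht.1], by linarith [ht.2]⟩, add_sub_add_left_eq_sub]
  · rw [hd, ← image_image f (fun t => p + t), image_const_add_Icc, add_zero, add_sub_cancel]

namespace IsGeodSeg

variable {x y : X} {s : Set X}

lemma symm (h : IsGeodSeg x y s) : IsGeodSeg y x s := by
  obtain ⟨f, hf0, hfD, hiso, rfl⟩ := h
  rw [IsGeodSeg, dist_comm y x]
  refine ⟨fun t => f (dist x y - t), by simpa using hfD, by simpa using hf0, ?_, ?_⟩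
  · intro s hs t ht
    rw [hiso _ ⟨by linarith [hs.2], by linarith [hs.1]⟩ _ ⟨by linarith [ht.2], by linarith [ht.1]⟩,
      sub_sub_sub_cancel_left, abs_sub_comm]
  · rw [← image_image f (fun t => dist x y - t)]
    simp

lemma left_mem (h : IsGeodSeg x y s) : x ∈ s := by
  obtain ⟨f, hf0, -, -, rfl⟩ := h
  exact ⟨0, ⟨le_rfl, dist_nonneg⟩, hf0⟩

lemma isCompact (h : IsGeodSeg x y s) : IsCompact s := by
  obtain ⟨f, -, -, hiso, rfl⟩ := h
  refine isCompact_Icc.image_of_continuousOn (LipschitzOnWith.continuousOn (K := 1) ?_)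
  refine LipschitzOnWith.of_dist_le_mul fun p hp q hq => ?_
  simp [hiso p hp q hq, Real.dist_eq]

lemma dist_add_dist_eq {q : X} (h : IsGeodSeg x y s) (hq : q ∈ s) :
    dist x q + dist q y = dist x y := by
  obtain ⟨f, rfl, hfD, hiso, rfl⟩ := h
  obtain ⟨t, ht, rfl⟩ := hq
  have hD : dist (f 0) y ∈ Icc 0 (dist (f 0) y) := ⟨dist_nonneg, le_rfl⟩
  have h0 : (0 : ℝ) ∈ Icc 0 (dist (f 0) y) := ⟨le_rfl, dist_nonneg⟩
  have hy := hiso t ht _ hD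
  rw [hfD] at hy
  rw [hiso 0 h0 t ht, hy, zero_sub, abs_neg, abs_of_nonneg ht.1,
    abs_of_nonpos (sub_nonpos.2 ht.2)]
  ring

lemma exists_mem_dist_eq (h : IsGeodSeg x y s) {t : ℝ} (ht : t ∈ Icc 0 (dist x y)) :
    ∃ p ∈ s, dist x p = t := by
  obtain ⟨f, rfl, -, hiso, rfl⟩ := h
  refine ⟨f t, mem_image_of_mem f ht, ?_⟩
  rw [hiso 0 ⟨le_rfl, dist_nonneg⟩ t ht, zero_sub, abs_neg, abs_of_nonneg ht.1]

lemma exists_subset {a c : X} (h : IsGeodSeg x y s) (ha : a ∈ s) (hc : c ∈ s) :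
    ∃ s' ⊆ s, IsGeodSeg a c s' := by
  obtain ⟨f, -, -, hiso, rfl⟩ := h
  obtain ⟨p, hp, rfl⟩ := ha
  obtain ⟨q, hq, rfl⟩ := hc
  rcases le_total p q with hpq | hqp
  · have hsub : Icc p q ⊆ Icc 0 (dist x y) := Icc_subset_Icc hp.1 hq.2
    exact ⟨f '' Icc p q, image_mono hsub,
      isGeodSeg_image_Icc hpq fun s hs t ht => hiso s (hsub hs) t (hsub ht)⟩
  · have hsub : Icc q p ⊆ Icc 0 (dist x y) := Icc_subset_Icc hq.1 hp.2
    exact ⟨f '' Icc q p, image_mono hsub,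
      (isGeodSeg_image_Icc hqp fun s hs t ht => hiso s (hsub hs) t (hsub ht)).symm⟩

lemma dist_add_dist_le {p q : X} (h : IsGeodSeg x y s) (hq : q ∈ s) :
    dist x p + dist p y ≤ dist x y + 2 * dist p q := by
  have := h.dist_add_dist_eq hq
  linarith [dist_triangle x q p, dist_triangle p q y, dist_comm p q]

end IsGeodSeg

namespace ThinTriangles

variable {δ : ℝ}

lemma exists_dist_le (hthin : ThinTriangles X δ) {x y z : X} {sxy syz sxz : Set X}
    (hxy : IsGeodSeg x y sxy) (hyz : IsGeodSeg y z syz) (hxz : IsGeodSeg x z sxz)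
    {p : X} (hp : p ∈ sxy) : ∃ q ∈ syz ∪ sxz, dist p q ≤ δ := by
  obtain ⟨q, hq, hpq⟩ := (hyz.isCompact.union hxz.isCompact).exists_infDist_eq_dist
    ⟨y, Or.inl hyz.left_mem⟩ p
  exact ⟨q, hq, hpq ▸ hthin x y z sxy syz sxz hxy hyz hxz p hp⟩

lemma dist_le_or_dist_le (hthin : ThinTriangles X δ) {a b c p : X} {sab scb sac : Set X}
    (hab : IsGeodSeg a b sab) (hcb : IsGeodSeg c b scb) (hac : IsGeodSeg a c sac)
    (hp : p ∈ sac) :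
    dist a p ≤ dist a b - dist p b + 2 * δ ∨ dist c p ≤ dist c b - dist p b + 2 * δ := by
  obtain ⟨q, hq | hq, hpq⟩ := hthin.exists_dist_le hac hcb hab hp
  · exact Or.inr (by linarith [hcb.dist_add_dist_le (p := p) hq])
  · exact Or.inl (by linarith [hab.dist_add_dist_le (p := p) hq])

end ThinTriangles

end

theorem lemma1_foot_of_perpendicular {X : Type*} [MetricSpace X] (δ : ℝ) (hδ : 0 ≤ δ)
    (hgeo : GeodesicSpace X) (hthin : ThinTriangles X δ)
    (x y b a c : X) (σ : Set X) (Δ : ℝ) (hΔ : 0 ≤ Δ)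
    (hσ : IsGeodSeg x y σ)
    (ha : a ∈ σ) (haR : dist b a = infDist b σ)
    (hc : c ∈ σ) (hcR : dist b c = infDist b σ + 2 * Δ) :
    dist a c ≤ 2 * Δ + 4 * δ := by
  by_contra! hlong
  obtain ⟨sac, hsub, hac⟩ := hσ.exists_subset ha hc
  obtain ⟨scb, hcb⟩ := hgeo c b
  obtain ⟨sab, hab⟩ := hgeo a b
  obtain ⟨p, hp, hap⟩ := hac.exists_mem_dist_eq (t := dist a c / 2 - Δ)
    ⟨by linarith, by linarith⟩
  have hpc := hac.dist_add_dist_eq hp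
  have hbp : infDist b σ ≤ dist p b := dist_comm b p ▸ infDist_le_dist_of_mem (hsub hp)
  rcases hthin.dist_le_or_dist_le hab hcb hac hp with h | h <;>
    linarith [dist_comm a b, dist_comm c b, dist_comm c p]
end

section
/- Let γ : [0, l] → F be a (λ, c)-quasi-geodesic in a metric space F and let Δ ≥ 2c. Then the Δ-length of γ satisfies L_Δ(γ) ≤ 2λl. -/
open Metric Set

/-- `γ` is a `(lam, c)`-quasi-geodesic (quasi-isometric embedding) on the set `I ⊆ ℝ`. -/
def IsQuasiGeodesicOn {X : Type*} [MetricSpace X] (lam c : ℝ) (γ : ℝ → X) (I : Set ℝ) : Prop :=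
  ∀ s ∈ I, ∀ t ∈ I,
    |s - t| / lam - c ≤ dist (γ s) (γ t) ∧ dist (γ s) (γ t) ≤ lam * |s - t| + c

/- Each step of a subdivision with mesh at least `Δ ≥ 2c` has image length `d ≥ 2c`, so the
additive constant `c` of the quasi-geodesic bound is at most `d / 2`; hence `d ≤ 2λ` times the
length of the step, and these bounds telescope to `2λl`. -/

theorem IsQuasiGeodesicOn.dist_le_two_mul_of_two_mul_le_dist {X : Type*} [MetricSpace X]
    {lam c : ℝ} {γ : ℝ → X} {I : Set ℝ} (hγ : IsQuasiGeodesicOn lam c γ I) {s t : ℝ}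
    (hs : s ∈ I) (ht : t ∈ I) (hst : 2 * c ≤ dist (γ s) (γ t)) :
    dist (γ s) (γ t) ≤ 2 * lam * |s - t| := by
  linarith [(hγ s hs t ht).2]

theorem Finset.sum_range_le_mul_sub_of_le {a x : ℕ → ℝ} {K : ℝ} {n : ℕ}
    (h : ∀ i < n, a i ≤ K * (x (i + 1) - x i)) :
    ∑ i ∈ Finset.range n, a i ≤ K * (x n - x 0) :=
  calc ∑ i ∈ Finset.range n, a i
      ≤ ∑ i ∈ Finset.range n, K * (x (i + 1) - x i) :=
        Finset.sum_le_sum fun i hi => h i (Finset.mem_range.mp hi)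
    _ = K * (x n - x 0) := by rw [← Finset.mul_sum, Finset.sum_range_sub]

theorem delta_length_le_general {F : Type*} [MetricSpace F] (lam c Δ l : ℝ)
    (hΔ : 2 * c ≤ Δ)
    (γ : ℝ → F) (hγ : IsQuasiGeodesicOn lam c γ (Icc 0 l))
    (n : ℕ) (x : ℕ → ℝ)
    (hx0 : x 0 = 0) (hxn : x n = l)
    (hmono : ∀ i < n, x i ≤ x (i + 1))
    (hmem : ∀ i ≤ n, x i ∈ Icc (0:ℝ) l)
    (hmesh : ∀ i < n, Δ ≤ dist (γ (x (i + 1))) (γ (x i))) :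
    ∑ i ∈ Finset.range n, dist (γ (x (i + 1))) (γ (x i)) ≤ 2 * lam * l := by
  have hstep : ∀ i < n, dist (γ (x (i + 1))) (γ (x i)) ≤ 2 * lam * (x (i + 1) - x i) := by
    intro i hi
    have h := hγ.dist_le_two_mul_of_two_mul_le_dist (hmem _ hi) (hmem _ hi.le)
      (hΔ.trans (hmesh i hi))
    rwa [abs_of_nonneg (sub_nonneg.2 (hmono i hi))] at h
  simpa [hx0, hxn] using Finset.sum_range_le_mul_sub_of_le hstep

/-- Lemma 7: the Δ-length of a (λ,c)-quasi-geodesic on an interval of length `l` is at most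
`2λl` (for `Δ ≥ 2c`): every subdivision of `[0, l]` with mesh ≥ Δ has total image length ≤ 2λl;
hence the supremum over such subdivisions, the Δ-length, is ≤ 2λl. -/
theorem delta_length_le {F : Type*} [MetricSpace F] (lam c Δ l : ℝ)
    (hlam : 1 ≤ lam) (hc : 0 ≤ c) (hl : 0 ≤ l) (hΔ : 2 * c ≤ Δ)
    (γ : ℝ → F) (hγ : IsQuasiGeodesicOn lam c γ (Icc 0 l))
    (n : ℕ) (x : ℕ → ℝ)
    (hx0 : x 0 = 0) (hxn : x n = l)
    (hmono : ∀ i < n, x i ≤ x (i + 1))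
    (hmem : ∀ i ≤ n, x i ∈ Icc (0:ℝ) l)
    (hmesh : ∀ i < n, Δ ≤ dist (γ (x (i + 1))) (γ (x i))) :
    ∑ i ∈ Finset.range n, dist (γ (x (i + 1))) (γ (x i)) ≤ 2 * lam * l :=
  delta_length_le_general lam c Δ l hΔ γ hγ n x hx0 hxn hmono hmem hmesh
end

section
/- Let γ : [0, l] → F be a (λ, c)-quasi-geodesic whose endpoints are at distance R ≥ c, and let Δ ≥ 2c. Then the Δ-length satisfies L_Δ(γ) ≤ 4λ²R. -/
/-!
A step of length `d ≥ Δ ≥ 2c` of a `(λ, c)`-quasi-geodesic absorbs the additive constant: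
`d ≤ λ·(parameter length) + c ≤ λ·(parameter length) + d/2`, so `d ≤ 2λ·(parameter length)`.
Summing over the subdivision gives `L_Δ(γ) ≤ 2λl`. Dually, `R ≥ c` absorbs the constant in the
lower bound `l/λ - c ≤ R`, so `l ≤ 2λR`.
-/

open Metric Set

section QuasiGeodesic

variable {X : Type*} [MetricSpace X] {lam c : ℝ} {γ : ℝ → X} {I : Set ℝ} {s t : ℝ}

theorem IsQuasiGeodesicOn.dist_le_two_mul_sub (hγ : IsQuasiGeodesicOn lam c γ I)
    (hs : s ∈ I) (ht : t ∈ I) (hst : s ≤ t) (hd : 2 * c ≤ dist (γ t) (γ s)) :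
    dist (γ t) (γ s) ≤ 2 * lam * (t - s) := by
  have hupper := (hγ t ht s hs).2
  rw [abs_of_nonneg (sub_nonneg.2 hst)] at hupper
  linarith

theorem IsQuasiGeodesicOn.sub_le_two_mul_dist (hγ : IsQuasiGeodesicOn lam c γ I)
    (hlam : 0 < lam) (hs : s ∈ I) (ht : t ∈ I) (hst : s ≤ t) (hd : c ≤ dist (γ s) (γ t)) :
    t - s ≤ 2 * lam * dist (γ s) (γ t) := by
  have hlower := (hγ s hs t ht).1
  rw [abs_sub_comm, abs_of_nonneg (sub_nonneg.2 hst), div_sub' hlam.ne', div_le_iff₀ hlam]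
    at hlower
  have := mul_le_mul_of_nonneg_left hd hlam.le
  linarith

end QuasiGeodesic

theorem Finset.sum_range_le_mul_sub {d x : ℕ → ℝ} {K : ℝ} {n : ℕ}
    (h : ∀ i < n, d i ≤ K * (x (i + 1) - x i)) :
    ∑ i ∈ Finset.range n, d i ≤ K * (x n - x 0) := by
  calc ∑ i ∈ Finset.range n, d i
      ≤ ∑ i ∈ Finset.range n, K * (x (i + 1) - x i) :=
        Finset.sum_le_sum fun i hi => h i (Finset.mem_range.1 hi)
    _ = K * (x n - x 0) := by rw [← Finset.mul_sum, Finset.sum_range_sub]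

theorem delta_length_le_of_endpoints_general {F : Type*} [MetricSpace F] (lam c Δ l : ℝ)
    (hlam : 1 ≤ lam) (hl : 0 ≤ l) (hΔ : 2 * c ≤ Δ)
    (γ : ℝ → F) (hγ : IsQuasiGeodesicOn lam c γ (Icc 0 l))
    (hR : c ≤ dist (γ 0) (γ l))
    (n : ℕ) (x : ℕ → ℝ)
    (hx0 : x 0 = 0) (hxn : x n = l)
    (hmono : ∀ i < n, x i ≤ x (i + 1))
    (hmem : ∀ i ≤ n, x i ∈ Icc (0:ℝ) l)
    (hmesh : ∀ i < n, Δ ≤ dist (γ (x (i + 1))) (γ (x i))) :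
    ∑ i ∈ Finset.range n, dist (γ (x (i + 1))) (γ (x i)) ≤ 4 * lam ^ 2 * dist (γ 0) (γ l) := by
  have hlam0 : 0 < lam := one_pos.trans_le hlam
  have hsteps : ∑ i ∈ Finset.range n, dist (γ (x (i + 1))) (γ (x i)) ≤ 2 * lam * l := by
    simpa [hx0, hxn] using Finset.sum_range_le_mul_sub fun i hi =>
      hγ.dist_le_two_mul_sub (hmem i hi.le) (hmem (i + 1) hi) (hmono i hi)
        (hΔ.trans (hmesh i hi))
  have hparam : l ≤ 2 * lam * dist (γ 0) (γ l) := by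
    simpa using hγ.sub_le_two_mul_dist hlam0 (left_mem_Icc.2 hl) (right_mem_Icc.2 hl) hl hR
  calc _ ≤ 2 * lam * l := hsteps
    _ ≤ 2 * lam * (2 * lam * dist (γ 0) (γ l)) := by gcongr
    _ = 4 * lam ^ 2 * dist (γ 0) (γ l) := by ring

/-- Lemma 8: if the endpoints of a (λ,c)-quasi-geodesic are at distance `R ≥ c` and `Δ ≥ 2c`,
then the Δ-length is at most `4λ²R`: every subdivision with mesh ≥ Δ has total length ≤ 4λ²R. -/
theorem delta_length_le_of_endpoints {F : Type*} [MetricSpace F] (lam c Δ l : ℝ)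
    (hlam : 1 ≤ lam) (hc : 0 ≤ c) (hl : 0 ≤ l) (hΔ : 2 * c ≤ Δ)
    (γ : ℝ → F) (hγ : IsQuasiGeodesicOn lam c γ (Icc 0 l))
    (hR : c ≤ dist (γ 0) (γ l))
    (n : ℕ) (x : ℕ → ℝ)
    (hx0 : x 0 = 0) (hxn : x n = l)
    (hmono : ∀ i < n, x i ≤ x (i + 1))
    (hmem : ∀ i ≤ n, x i ∈ Icc (0:ℝ) l)
    (hmesh : ∀ i < n, Δ ≤ dist (γ (x (i + 1))) (γ (x i))) :
    ∑ i ∈ Finset.range n, dist (γ (x (i + 1))) (γ (x i)) ≤ 4 * lam ^ 2 * dist (γ 0) (γ l) :=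
  delta_length_le_of_endpoints_general lam c Δ l hlam hl hΔ γ hγ hR n x hx0 hxn hmono hmem hmesh
end

section
/- In a metric tree (a 0-hyperbolic geodesic space), for every λ ≥ 1 and c > 0 there exists a (λ, c)-quasi-geodesic γ and a geodesic σ joining its endpoints such that some point of γ is at distance λ²c/2 from σ. Concretely: let [a, b] be a geodesic segment of length λ²c/2, parameterize γ by I = [u, v] of length λc by γ(u) = γ(v) = a, γ(w) = b at the midpoint w, and |a - γ(x)| = λ·min(|u - x|, |v - x|) in general; then γ is a (λ, c)-quasi-geodesic and d(γ(w), σ) = λ²c/2 where σ is the degenerate geodesic from a to a. -/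
/-! The tent map `x ↦ λ · min x (l - x)` on `[0, λc]` rises with slope `λ` up to height `λ²c/2`
and returns to its starting point. Being `λ`-Lipschitz it satisfies the upper quasi-geodesic
bound, and the lower bound is automatic because the parameter interval has length `λc`. -/

open Metric Set

theorem IsQuasiGeodesicOn.of_dist_le {X : Type*} [MetricSpace X] {lam c : ℝ} {γ : ℝ → X}
    {I : Set ℝ} (hlam : 0 < lam) (hc : 0 ≤ c)
    (hγ : ∀ s ∈ I, ∀ t ∈ I, dist (γ s) (γ t) ≤ lam * |s - t|)
    (hI : ∀ s ∈ I, ∀ t ∈ I, |s - t| ≤ lam * c) :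
    IsQuasiGeodesicOn lam c γ I := by
  intro s hs t ht
  constructor
  · have : |s - t| / lam ≤ c := by
      rw [div_le_iff₀ hlam, mul_comm]
      exact hI s hs t ht
    linarith [dist_nonneg (x := γ s) (y := γ t)]
  · linarith [hγ s hs t ht]

def tent (lam l x : ℝ) : ℝ := lam * min x (l - x)

theorem abs_min_sub_min_reflect_le (l s t : ℝ) :
    |min s (l - s) - min t (l - t)| ≤ |s - t| := by
  calc |min s (l - s) - min t (l - t)| ≤ max |s - t| |(l - s) - (l - t)| :=
        abs_min_sub_min_le_max _ _ _ _
    _ = |s - t| := by rw [sub_sub_sub_cancel_left, abs_sub_comm, max_self]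

theorem dist_tent_le {lam : ℝ} (hlam : 0 ≤ lam) (l s t : ℝ) :
    dist (tent lam l s) (tent lam l t) ≤ lam * |s - t| := by
  rw [Real.dist_eq, tent, tent, ← mul_sub, abs_mul, abs_of_nonneg hlam]
  exact mul_le_mul_of_nonneg_left (abs_min_sub_min_reflect_le l s t) hlam

theorem tent_self {l : ℝ} (hl : 0 ≤ l) (lam : ℝ) : tent lam l l = tent lam l 0 := by
  simp [tent, hl]

theorem tent_zero {l : ℝ} (hl : 0 ≤ l) (lam : ℝ) : tent lam l 0 = 0 := by
  simp [tent, hl]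

theorem tent_half (lam l : ℝ) : tent lam l (l / 2) = lam * l / 2 := by
  rw [tent, show l - l / 2 = l / 2 by ring, min_self, mul_div_assoc]

/-- Optimality of the Morse lemma: in the tree ℝ, for every λ ≥ 1, c > 0 there is a
(λ,c)-quasi-geodesic `γ` with equal endpoints (so the geodesic σ joining them is the single
point γ 0) having a point at distance exactly `λ²c/2` from σ. -/
theorem morse_lemma_optimal (lam c : ℝ) (hlam : 1 ≤ lam) (hc : 0 < c) :
    ∃ (l : ℝ) (γ : ℝ → ℝ), 0 ≤ l ∧
      IsQuasiGeodesicOn lam c γ (Icc 0 l) ∧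
      γ l = γ 0 ∧
      ∃ t ∈ Icc (0:ℝ) l, dist (γ t) (γ 0) = lam ^ 2 * c / 2 := by
  have hlam0 : 0 < lam := zero_lt_one.trans_le hlam
  have hl : 0 ≤ lam * c := by positivity
  refine ⟨lam * c, tent lam (lam * c), hl, ?_, tent_self hl lam, ?_⟩
  · refine .of_dist_le hlam0 hc.le (fun s _ t _ => dist_tent_le hlam0.le _ s t) ?_
    intro s hs t ht
    simpa [Real.dist_eq] using Real.dist_le_of_mem_Icc hs ht
  · refine ⟨lam * c / 2, ⟨by positivity, by linarith⟩, ?_⟩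
    rw [tent_half, tent_zero hl, Real.dist_eq, sub_zero, abs_of_nonneg (by positivity)]
    ring
end

section
/- In a metric tree with a distinguished geodesic segment [O, p] of length λc/2 inside a ball B of radius R > λc centered at O, there exists a (λ, c)-self-quasi-isometry f of B that fixes all points at distance ≥ λc from O and satisfies d(O, f(O)) = λc/2. (Construction: f collapses [O, f(O)] to the point f(O) = p and, for each boundary point a of the ball of radius λc, linearly stretches the segment from a to its projection a' on [O, p] onto the segment [a, p].) -/
/-!
In a tree, sliding each point `z` along `[p, z]` to the point at distance `σ z` from `p` gives a
map `F` with `d(F x, F y) = max (|σ x - σ y|, σ x + σ y - 2 (x|y)_p) ≤ max (|σ x - σ y|, d(x, y))`,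
because geodesics issuing from `p` towards `x` and `y` coincide up to time `(x|y)_p`. Take
`σ z = min (d(p, z), λ d(O, z) + min (c, d(O, z)))`: it is `(λ, c)`-coarsely Lipschitz, vanishes at
`O` (so `F O = p`) and equals `d(p, z)` once `d(O, z) ≥ λc` (so far points are fixed). No point
moves by more than `d(O, p) = λc/2`, which gives the lower quasi-isometry bound. A point at
distance `≥ c/2` from `[O, p]` moves by at most `c`, and a point closer to `[O, p]` is `c`-close to
a fixed point of `[O, p]`.
-/

open Metric Set

section GeodesicPaths

variable {X : Type*} [MetricSpace X]

def IsGeodesicPath (γ : ℝ → X) (x y : X) : Prop :=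
  γ 0 = x ∧ γ (dist x y) = y ∧
    ∀ a ∈ Icc (0:ℝ) (dist x y), ∀ b ∈ Icc (0:ℝ) (dist x y), dist (γ a) (γ b) = |a - b|

noncomputable def gromovProduct (w x y : X) : ℝ := (dist w x + dist w y - dist x y) / 2

lemma gromovProduct_nonneg (w x y : X) : 0 ≤ gromovProduct w x y := by
  unfold gromovProduct; linarith [dist_triangle_left x y w]

lemma gromovProduct_le_dist_left (w x y : X) : gromovProduct w x y ≤ dist w x := by
  unfold gromovProduct; linarith [dist_triangle w x y]

lemma gromovProduct_le_dist_right (w x y : X) : gromovProduct w x y ≤ dist w y := by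
  unfold gromovProduct; linarith [dist_triangle_right w x y]

namespace IsGeodesicPath

variable {γ : ℝ → X} {x y : X} {a b : ℝ}

lemma dist_apply (hγ : IsGeodesicPath γ x y) (ha : a ∈ Icc 0 (dist x y))
    (hb : b ∈ Icc 0 (dist x y)) : dist (γ a) (γ b) = |a - b| :=
  hγ.2.2 a ha b hb

lemma dist_left (hγ : IsGeodesicPath γ x y) (ha : a ∈ Icc 0 (dist x y)) :
    dist x (γ a) = a := by
  rw [← hγ.1, hγ.dist_apply (left_mem_Icc.2 dist_nonneg) ha, zero_sub, abs_neg,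
    abs_of_nonneg ha.1]

lemma dist_right (hγ : IsGeodesicPath γ x y) (ha : a ∈ Icc 0 (dist x y)) :
    dist (γ a) y = dist x y - a := by
  calc dist (γ a) y = dist (γ a) (γ (dist x y)) := by rw [hγ.2.1]
    _ = dist x y - a := by
      rw [hγ.dist_apply ha (right_mem_Icc.2 dist_nonneg), abs_sub_comm,
        abs_of_nonneg (sub_nonneg.2 ha.2)]

lemma isCompact_image (hγ : IsGeodesicPath γ x y) : IsCompact (γ '' Icc 0 (dist x y)) := by
  refine isCompact_Icc.image_of_continuousOn (LipschitzOnWith.continuousOn (K := 1) ?_)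
  refine LipschitzOnWith.of_dist_le_mul fun a ha b hb => ?_
  rw [hγ.dist_apply ha hb, Real.dist_eq, NNReal.coe_one, one_mul]

lemma isGeodSeg (hγ : IsGeodesicPath γ x y) : IsGeodSeg x y (γ '' Icc 0 (dist x y)) :=
  ⟨γ, hγ.1, hγ.2.1, hγ.2.2, rfl⟩

end IsGeodesicPath

lemma IsGeodSeg.exists_isGeodesicPath {x y : X} {s : Set X} (h : IsGeodSeg x y s) :
    ∃ γ, IsGeodesicPath γ x y ∧ s = γ '' Icc 0 (dist x y) := by
  obtain ⟨γ, h0, h1, hi, rfl⟩ := h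
  exact ⟨γ, ⟨h0, h1, hi⟩, rfl⟩

lemma GeodesicSpace.exists_isGeodesicPath (hgeo : GeodesicSpace X) (x y : X) :
    ∃ γ : ℝ → X, IsGeodesicPath γ x y := by
  obtain ⟨s, hs⟩ := hgeo x y
  obtain ⟨γ, hγ, -⟩ := hs.exists_isGeodesicPath
  exact ⟨γ, hγ⟩

noncomputable def GeodesicSpace.path (hgeo : GeodesicSpace X) (x y : X) : ℝ → X :=
  (hgeo.exists_isGeodesicPath x y).choose

lemma GeodesicSpace.isGeodesicPath_path (hgeo : GeodesicSpace X) (x y : X) :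
    IsGeodesicPath (hgeo.path x y) x y :=
  (hgeo.exists_isGeodesicPath x y).choose_spec

end GeodesicPaths

section Trees

variable {X : Type*} [MetricSpace X] {b x y : X} {α β : ℝ → X}

namespace IsGeodesicPath

lemma apply_eq_of_lt_gromovProduct (hgeo : GeodesicSpace X) (htree : ThinTriangles X 0)
    (hα : IsGeodesicPath α b x) (hβ : IsGeodesicPath β b y) {s : ℝ} (hs0 : 0 ≤ s)
    (hs : s < gromovProduct b x y) : α s = β s := by
  have hsx : s ∈ Icc 0 (dist b x) := ⟨hs0, hs.le.trans (gromovProduct_le_dist_left b x y)⟩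
  obtain ⟨g, hg⟩ := hgeo.exists_isGeodesicPath x y
  have hmem : α s ∈ g '' Icc 0 (dist x y) ∪ β '' Icc 0 (dist b y) := by
    have hclosed := (hg.isCompact_image.union hβ.isCompact_image).isClosed
    rw [hclosed.mem_iff_infDist_zero ⟨y, Or.inl ⟨_, right_mem_Icc.2 dist_nonneg, hg.2.1⟩⟩]
    exact le_antisymm (htree b x y _ _ _ hα.isGeodSeg hg.isGeodSeg hβ.isGeodSeg _ ⟨s, hsx, rfl⟩)
      infDist_nonneg
  rcases hmem with ⟨r, hr, hgr⟩ | ⟨t, ht, hβt⟩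
  · -- a point of `[x, y]` at distance `s` from `b` forces `s ≥ (x|y)_b`
    have hxr : dist x (α s) = r := by rw [← hgr, hg.dist_left hr]
    have hry : dist (α s) y = dist x y - r := by rw [← hgr, hg.dist_right hr]
    have hxs : dist x (α s) = dist b x - s := by rw [dist_comm, hα.dist_right hsx]
    have := dist_triangle b (α s) y
    rw [hα.dist_left hsx] at this
    unfold gromovProduct at hs
    linarith
  · have hts : t = s := by rw [← hβ.dist_left ht, hβt, hα.dist_left hsx]
    rw [← hβt, hts]

lemma apply_eq_of_le_gromovProduct (hgeo : GeodesicSpace X) (htree : ThinTriangles X 0)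
    (hα : IsGeodesicPath α b x) (hβ : IsGeodesicPath β b y) {s : ℝ} (hs0 : 0 ≤ s)
    (hs : s ≤ gromovProduct b x y) : α s = β s := by
  rcases hs.lt_or_eq with hlt | rfl
  · exact apply_eq_of_lt_gromovProduct hgeo htree hα hβ hs0 hlt
  set m := gromovProduct b x y
  rcases hs0.eq_or_lt with hm | hm
  · rw [← hm, hα.1, hβ.1]
  by_contra hne
  set d := dist (α m) (β m)
  have hd : 0 < d := dist_pos.2 hne
  -- approach `m` from below, where the two paths already agree
  set s := max 0 (m - d / 4)
  have hs : s ∈ Icc 0 m := ⟨le_max_left _ _, max_le hm.le (by linarith)⟩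
  have hsm : m - s ≤ d / 4 := by linarith [le_max_right 0 (m - d / 4)]
  have hmx : m ≤ dist b x := gromovProduct_le_dist_left b x y
  have hmy : m ≤ dist b y := gromovProduct_le_dist_right b x y
  have hαβ : α s = β s :=
    apply_eq_of_lt_gromovProduct hgeo htree hα hβ hs.1 (max_lt hm (by linarith))
  have := dist_triangle4 (α m) (α s) (β s) (β m)
  rw [hα.dist_apply ⟨hm.le, hmx⟩ ⟨hs.1, hs.2.trans hmx⟩,
    hβ.dist_apply ⟨hs.1, hs.2.trans hmy⟩ ⟨hm.le, hmy⟩, hαβ, dist_self, add_zero,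
    abs_of_nonneg (sub_nonneg.2 hs.2), abs_of_nonpos (sub_nonpos.2 hs.2)] at this
  linarith

theorem dist_apply_eq_max (hgeo : GeodesicSpace X) (htree : ThinTriangles X 0)
    (hα : IsGeodesicPath α b x) (hβ : IsGeodesicPath β b y) {s t : ℝ}
    (hs : s ∈ Icc 0 (dist b x)) (ht : t ∈ Icc 0 (dist b y)) :
    dist (α s) (β t) = max |s - t| (s + t - 2 * gromovProduct b x y) := by
  set m := gromovProduct b x y
  apply le_antisymm
  · set μ := min (min s t) m
    have hμs : μ ≤ s := (min_le_left _ _).trans (min_le_left _ _)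
    have hμt : μ ≤ t := (min_le_left _ _).trans (min_le_right _ _)
    have hμ0 : 0 ≤ μ := le_min (le_min hs.1 ht.1) (gromovProduct_nonneg b x y)
    have hαβ : α μ = β μ :=
      apply_eq_of_le_gromovProduct hgeo htree hα hβ hμ0 (min_le_right _ _)
    calc dist (α s) (β t) ≤ dist (α s) (α μ) + dist (α μ) (β μ) + dist (β μ) (β t) :=
          dist_triangle4 _ _ _ _
      _ = s + t - 2 * μ := by
        rw [hα.dist_apply hs ⟨hμ0, hμs.trans hs.2⟩, hβ.dist_apply ⟨hμ0, hμt.trans ht.2⟩ ht,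
          hαβ, dist_self, add_zero, abs_of_nonneg (sub_nonneg.2 hμs),
          abs_of_nonpos (sub_nonpos.2 hμt)]
        ring
      _ ≤ max |s - t| (s + t - 2 * m) := by
        rcases le_total (min s t) m with h | h
        · rw [show μ = min s t from min_eq_left h]
          refine le_max_of_le_left ?_
          rcases le_total s t with hst | hst
          · rw [min_eq_left hst, abs_of_nonpos (sub_nonpos.2 hst)]; linarith
          · rw [min_eq_right hst, abs_of_nonneg (sub_nonneg.2 hst)]; linarith
        · rw [show μ = m from min_eq_right h]
          exact le_max_right _ _
  · have hb := dist_triangle b (α s) (β t)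
    have hb' := dist_triangle b (β t) (α s)
    have hxy := dist_triangle4 x (α s) (β t) y
    rw [hα.dist_left hs, hβ.dist_left ht] at hb hb'
    rw [dist_comm x (α s), hα.dist_right hs, hβ.dist_right ht] at hxy
    rw [dist_comm] at hb'
    unfold m gromovProduct
    exact max_le (abs_sub_le_iff.2 ⟨by linarith, by linarith⟩) (by linarith)

theorem dist_apply_le_max (hgeo : GeodesicSpace X) (htree : ThinTriangles X 0)
    (hα : IsGeodesicPath α b x) {s : ℝ} (hs : s ∈ Icc 0 (dist b x)) (w : X) :
    dist (α s) w ≤ max (dist b w) (dist x w) := by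
  obtain ⟨β, hβ⟩ := hgeo.exists_isGeodesicPath b w
  have h := hα.dist_apply_eq_max hgeo htree hβ hs (right_mem_Icc.2 dist_nonneg)
  rw [hβ.2.1] at h
  rw [h]
  have := dist_triangle_right b x w
  have := le_max_left (dist b w) (dist x w)
  have := le_max_right (dist b w) (dist x w)
  unfold gromovProduct
  exact max_le (abs_sub_le_iff.2 ⟨by linarith [hs.2], by linarith [hs.1]⟩) (by linarith [hs.2])

theorem exists_branch_point (hgeo : GeodesicSpace X) (htree : ThinTriangles X 0)
    (hα : IsGeodesicPath α b x) (y : X) :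
    ∃ u ∈ Icc 0 (dist b x),
      dist b y = u + dist (α u) y ∧ dist x y = dist b x - u + dist (α u) y := by
  obtain ⟨β, hβ⟩ := hgeo.exists_isGeodesicPath b y
  have hu : gromovProduct b x y ∈ Icc 0 (dist b x) :=
    ⟨gromovProduct_nonneg b x y, gromovProduct_le_dist_left b x y⟩
  have h := hα.dist_apply_eq_max hgeo htree hβ hu (right_mem_Icc.2 dist_nonneg)
  rw [hβ.2.1, abs_sub_comm, abs_of_nonneg (sub_nonneg.2 (gromovProduct_le_dist_right b x y)),
    max_eq_left (by linarith)] at h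
  refine ⟨_, hu, ?_, ?_⟩ <;> rw [h] <;> unfold gromovProduct <;> ring

end IsGeodesicPath

end Trees

section PullToward

variable {X : Type*} [MetricSpace X] (hgeo : GeodesicSpace X) {p : X} {σ : X → ℝ}

noncomputable def GeodesicSpace.pullToward (p : X) (σ : X → ℝ) (z : X) : X :=
  hgeo.path p z (σ z)

namespace GeodesicSpace

lemma dist_pullToward_self {z : X} (hσ : σ z ∈ Icc 0 (dist p z)) :
    dist (hgeo.pullToward p σ z) z = dist p z - σ z :=
  (hgeo.isGeodesicPath_path p z).dist_right hσ

lemma pullToward_of_eq_dist {z : X} (h : σ z = dist p z) : hgeo.pullToward p σ z = z := by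
  rw [pullToward, h, (hgeo.isGeodesicPath_path p z).2.1]

lemma pullToward_of_eq_zero {z : X} (h : σ z = 0) : hgeo.pullToward p σ z = p := by
  rw [pullToward, h, (hgeo.isGeodesicPath_path p z).1]

lemma dist_pullToward_le (htree : ThinTriangles X 0) (hσ : ∀ z, σ z ∈ Icc 0 (dist p z))
    (x y : X) :
    dist (hgeo.pullToward p σ x) (hgeo.pullToward p σ y) ≤ max |σ x - σ y| (dist x y) := by
  rw [pullToward, pullToward, (hgeo.isGeodesicPath_path p x).dist_apply_eq_max hgeo htree
    (hgeo.isGeodesicPath_path p y) (hσ x) (hσ y)]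
  refine max_le_max le_rfl ?_
  unfold gromovProduct
  linarith [(hσ x).2, (hσ y).2]

lemma dist_pullToward_le_max (htree : ThinTriangles X 0) (hσ : ∀ z, σ z ∈ Icc 0 (dist p z))
    (z w : X) : dist (hgeo.pullToward p σ z) w ≤ max (dist p w) (dist z w) :=
  (hgeo.isGeodesicPath_path p z).dist_apply_le_max hgeo htree (hσ z) w

end GeodesicSpace

end PullToward

section MoveProfile

variable {X : Type*} [MetricSpace X] {O p z : X} {lam c : ℝ}

noncomputable def moveProfile (O p : X) (lam c : ℝ) (z : X) : ℝ :=
  min (dist p z) (lam * dist O z + min c (dist O z))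

lemma moveProfile_mem_Icc (hlam : 0 ≤ lam) (hc : 0 ≤ c) :
    moveProfile O p lam c z ∈ Icc 0 (dist p z) :=
  ⟨le_min dist_nonneg (add_nonneg (mul_nonneg hlam dist_nonneg) (le_min hc dist_nonneg)),
    min_le_left _ _⟩

lemma moveProfile_self (hc : 0 ≤ c) : moveProfile O p lam c O = 0 := by
  simp only [moveProfile, dist_self, mul_zero, zero_add, min_eq_right hc, min_eq_right dist_nonneg]

lemma moveProfile_eq_dist_of_le (hc : 0 ≤ c) (h : dist p z ≤ lam * dist O z) :
    moveProfile O p lam c z = dist p z :=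
  min_eq_left (h.trans (le_add_of_nonneg_right (le_min hc dist_nonneg)))

lemma moveProfile_eq_dist_of_le_dist (hlam : 1 ≤ lam) (hc : 0 ≤ c) (hOp : dist O p ≤ lam * c / 2)
    (hz : lam * c ≤ dist O z) : moveProfile O p lam c z = dist p z := by
  have hcz : c ≤ dist O z := le_trans (by nlinarith) hz
  refine min_eq_left ?_
  rw [min_eq_left hcz]
  have := dist_triangle_left p z O
  -- `λc/2 + d ≤ λd + c` for `d ≥ λc`, as `λ² - 3λ/2 + 1 > 0`
  nlinarith [mul_nonneg (sub_nonneg.2 hlam) (sub_nonneg.2 hz), mul_nonneg hc (sq_nonneg (lam - 3/4))]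

lemma abs_moveProfile_sub_le (hlam : 1 ≤ lam) (hc : 0 ≤ c) (x y : X) :
    |moveProfile O p lam c x - moveProfile O p lam c y| ≤ lam * dist x y + c := by
  have hlam0 : 0 ≤ lam := zero_le_one.trans hlam
  have hxy : 0 ≤ dist x y := dist_nonneg
  refine (abs_min_sub_min_le_max _ _ _ _).trans (max_le ?_ ?_)
  · have := abs_dist_sub_le x y p
    rw [dist_comm x p, dist_comm y p] at this
    nlinarith
  · have hO : |lam * dist O x - lam * dist O y| ≤ lam * dist x y := by
      have := abs_dist_sub_le x y O
      rw [dist_comm x O, dist_comm y O] at this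
      rw [← mul_sub, abs_mul, abs_of_nonneg hlam0]
      exact mul_le_mul_of_nonneg_left this hlam0
    have hx := min_le_left c (dist O x)
    have hy := min_le_left c (dist O y)
    have hx0 := le_min hc (dist_nonneg (x := O) (y := x))
    have hy0 := le_min hc (dist_nonneg (x := O) (y := y))
    rw [abs_le] at hO ⊢
    constructor <;> linarith

lemma dist_sub_moveProfile_le (hc : 0 ≤ c) :
    dist p z - moveProfile O p lam c z ≤ max 0 (dist p z - lam * dist O z) := by
  rcases min_cases (dist p z) (lam * dist O z + min c (dist O z)) with ⟨h, -⟩ | ⟨h, -⟩ <;>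
    rw [moveProfile, h]
  · simp
  · exact le_max_of_le_right (by linarith [le_min hc (dist_nonneg (x := O) (y := z))])

end MoveProfile

lemma div_sub_le_dist_of_dist_apply_le {X : Type*} [MetricSpace X] {f : X → X} {lam c : ℝ}
    (hlam : 1 ≤ lam) (hf : ∀ z, dist (f z) z ≤ lam * c / 2) (x y : X) :
    dist x y / lam - c ≤ dist (f x) (f y) := by
  have hlam0 : 0 < lam := zero_lt_one.trans_le hlam
  have hmoved : dist x y - lam * c ≤ dist (f x) (f y) := by
    have := dist_triangle4 x (f x) (f y) y
    linarith [hf x, hf y, dist_comm x (f x)]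
  rcases le_total (dist x y) (lam * c) with h | h
  · have : dist x y / lam ≤ c := by rw [div_le_iff₀ hlam0]; linarith
    linarith [dist_nonneg (x := f x) (y := f y)]
  · refine le_trans ?_ hmoved
    rw [div_sub' hlam0.ne', div_le_iff₀ hlam0]
    nlinarith [mul_nonneg (sub_nonneg.2 hlam) (sub_nonneg.2 h)]

theorem GeodesicSpace.exists_dist_pullToward_moveProfile_le {X : Type*} [MetricSpace X]
    (hgeo : GeodesicSpace X) (htree : ThinTriangles X 0) {O p : X} {γ : ℝ → X}
    (hγ : IsGeodesicPath γ O p) {lam c R : ℝ} (hlam : 1 ≤ lam) (hc : 0 ≤ c)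
    (hOp : dist O p = lam * c / 2) (hR : dist O p ≤ R) {y : X} (hy : y ∈ closedBall O R) :
    ∃ x ∈ closedBall O R, dist (hgeo.pullToward p (moveProfile O p lam c) x) y ≤ c := by
  have hlam0 : 0 < lam := zero_lt_one.trans_le hlam
  obtain ⟨u, hu, hOy, hpy⟩ := hγ.exists_branch_point hgeo htree y
  rcases le_total (c / 2) (dist (γ u) y) with hv | hv
  · -- far from `[O, p]`, the point `y` itself moves by at most `c`
    refine ⟨y, hy, ?_⟩
    rw [hgeo.dist_pullToward_self (moveProfile_mem_Icc hlam0.le hc)]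
    refine (dist_sub_moveProfile_le hc).trans (max_le hc ?_)
    rw [hOy, hpy, hOp]
    nlinarith [mul_nonneg (sub_nonneg.2 hlam) (sub_nonneg.2 hv), mul_nonneg hlam0.le hu.1]
  · -- near `[O, p]`, use a point of `[O, p]` far enough from `O` to be fixed
    set s := max u (dist O p / (1 + lam))
    have hq : dist O p / (1 + lam) ≤ c / 2 := by
      rw [div_le_iff₀ (by linarith), hOp]; nlinarith
    have hs : s ∈ Icc 0 (dist O p) :=
      ⟨hu.1.trans (le_max_left _ _), max_le hu.2 (div_le_self dist_nonneg (by linarith))⟩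
    have hfix : hgeo.pullToward p (moveProfile O p lam c) (γ s) = γ s := by
      refine hgeo.pullToward_of_eq_dist (moveProfile_eq_dist_of_le hc ?_)
      rw [dist_comm, hγ.dist_right hs, hγ.dist_left hs]
      have := (div_le_iff₀ (by linarith : (0:ℝ) < 1 + lam)).1 (le_max_right u (dist O p / (1 + lam)))
      linarith
    refine ⟨γ s, ?_, ?_⟩
    · rw [mem_closedBall, dist_comm, hγ.dist_left hs]
      exact hs.2.trans hR
    · have hsu : s - u ≤ c / 2 := by
        have : s ≤ u + dist O p / (1 + lam) :=
          max_le (le_add_of_nonneg_right (div_nonneg dist_nonneg (by linarith)))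
            (le_add_of_nonneg_left hu.1)
        linarith
      rw [hfix]
      calc dist (γ s) y ≤ dist (γ s) (γ u) + dist (γ u) y := dist_triangle _ _ _
        _ = s - u + dist (γ u) y := by
          rw [hγ.dist_apply hs hu, abs_of_nonneg (sub_nonneg.2 (le_max_left _ _))]
        _ ≤ c := by linarith

/-- In a metric tree (geodesic 0-hyperbolic space) with a geodesic segment `[O, p]` of length
`λc/2` inside a ball `B` of radius `R > λc` centered at `O`, there is a (λ,c)-self-quasi-isometry
of `B` fixing all points at distance ≥ λc from `O` and moving the center `O` to `p`,
a displacement of exactly `λc/2`. -/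
theorem tree_ball_self_quasi_isometry_moving_center {X : Type*} [MetricSpace X]
    (hgeo : GeodesicSpace X) (htree : ThinTriangles X 0)
    (lam c R : ℝ) (hlam : 1 ≤ lam) (hc : 0 < c) (hR : lam * c < R)
    (O p : X) (τ : Set X) (hτ : IsGeodSeg O p τ) (hOp : dist O p = lam * c / 2) :
    ∃ f : X → X,
      Set.MapsTo f (closedBall O R) (closedBall O R) ∧
      (∀ x ∈ closedBall O R, ∀ y ∈ closedBall O R,
        dist x y / lam - c ≤ dist (f x) (f y) ∧ dist (f x) (f y) ≤ lam * dist x y + c) ∧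
      (∀ y ∈ closedBall O R, ∃ x ∈ closedBall O R, dist (f x) y ≤ c) ∧
      (∀ x ∈ closedBall O R, lam * c ≤ dist x O → f x = x) ∧
      f O = p ∧ dist O (f O) = lam * c / 2 := by
  obtain ⟨γ, hγ, -⟩ := hτ.exists_isGeodesicPath
  have hlam0 : 0 ≤ lam := zero_le_one.trans hlam
  have hOpR : dist O p ≤ R := by rw [hOp]; nlinarith
  have hσ : ∀ z, moveProfile O p lam c z ∈ Icc 0 (dist p z) :=
    fun z => moveProfile_mem_Icc hlam0 hc.le
  have hFO : hgeo.pullToward p (moveProfile O p lam c) O = p :=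
    hgeo.pullToward_of_eq_zero (moveProfile_self hc.le)
  have hmoved : ∀ z, dist (hgeo.pullToward p (moveProfile O p lam c) z) z ≤ lam * c / 2 := by
    intro z
    rw [hgeo.dist_pullToward_self (hσ z), ← hOp]
    refine (dist_sub_moveProfile_le hc.le).trans (max_le dist_nonneg ?_)
    nlinarith [dist_triangle_left p z O, dist_nonneg (x := O) (y := z)]
  refine ⟨hgeo.pullToward p (moveProfile O p lam c), fun z hz => ?_, fun x _ y _ => ⟨?_, ?_⟩,
    fun y hy => hgeo.exists_dist_pullToward_moveProfile_le htree hγ hlam hc.le hOp hOpR hy,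
    fun x _ hx => ?_, hFO, by rw [hFO, hOp]⟩
  · rw [mem_closedBall] at hz ⊢
    have := hgeo.dist_pullToward_le_max htree hσ z O
    rw [dist_comm p O] at this
    exact this.trans (max_le hOpR hz)
  · exact div_sub_le_dist_of_dist_apply_le hlam hmoved x y
  · refine (hgeo.dist_pullToward_le htree hσ x y).trans
      (max_le (abs_moveProfile_sub_le hlam hc.le x y) ?_)
    nlinarith [dist_nonneg (x := x) (y := y)]
  · refine hgeo.pullToward_of_eq_dist (moveProfile_eq_dist_of_le_dist hlam hc.le hOp.le ?_)
    rwa [dist_comm]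
end
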